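/- arXiv:0807.2629 — 10 statements merged into one kernel-verified Lean document; each statement's English description precedes it below -/
import Mathlib

section
/- Let ℓ and r be positive integers. Then the binary expansions of ℓ, 2r, and ℓ+r are not pairwise disjoint. -/
/-!
Let `s n` be the sum of the binary digits of `n`. It is subadditive, it is additive on numbers
with disjoint binary expansions, and `s (2 * n) = s n`. If `ℓ`, `2r` and `ℓ + r` were pairwise
disjoint, then their sum `2ℓ + 3r = 2(ℓ + r) + r` would give
`s ℓ + s r + s (ℓ + r) = s (2(ℓ + r) + r) ≤ s (ℓ + r) + s r`,
so `s ℓ = 0` and `ℓ = 0`.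
-/

namespace Nat

theorem sum_digits_eq_mod_add_sum_digits_div {b : ℕ} (hb : 1 < b) (n : ℕ) :
    (digits b n).sum = n % b + (digits b (n / b)).sum := by
  rcases Nat.eq_zero_or_pos n with rfl | hn
  · simp
  · rw [digits_def' hb hn, List.sum_cons]

theorem sum_digits_base_mul {b : ℕ} (hb : 1 < b) (n : ℕ) :
    (digits b (b * n)).sum = (digits b n).sum := by
  rw [sum_digits_eq_mod_add_sum_digits_div hb, Nat.mul_mod_right,
    Nat.mul_div_cancel_left _ (by omega), zero_add]

theorem sum_digits_pos {b n : ℕ} (hb : 1 < b) (hn : 0 < n) : 0 < (digits b n).sum := by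
  induction n using Nat.strong_induction_on with
  | _ n ih =>
    rw [sum_digits_eq_mod_add_sum_digits_div hb]
    by_cases h : n % b = 0
    · have hbn : b ≤ n := Nat.le_of_dvd hn (Nat.dvd_of_mod_eq_zero h)
      have := ih (n / b) (Nat.div_lt_self hn hb) (Nat.div_pos hbn (by omega))
      omega
    · omega

theorem sum_digits_two_succ_le (n : ℕ) : (digits 2 (n + 1)).sum ≤ (digits 2 n).sum + 1 := by
  induction n using Nat.strong_induction_on with
  | _ n ih =>
    rw [sum_digits_eq_mod_add_sum_digits_div one_lt_two n,
      sum_digits_eq_mod_add_sum_digits_div one_lt_two (n + 1)]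
    rcases Nat.mod_two_eq_zero_or_one n with h | h
    · have hdiv : (n + 1) / 2 = n / 2 := by omega
      rw [hdiv]
      omega
    · have hdiv : (n + 1) / 2 = n / 2 + 1 := by omega
      have := ih (n / 2) (by omega)
      rw [hdiv]
      omega

theorem sum_digits_two_add_le (m n : ℕ) :
    (digits 2 (m + n)).sum ≤ (digits 2 m).sum + (digits 2 n).sum := by
  induction m using Nat.strong_induction_on generalizing n with
  | _ m ih =>
    rcases Nat.eq_zero_or_pos m with rfl | hm
    · simp
    have ih' := ih (m / 2) (by omega) (n / 2)
    rw [sum_digits_eq_mod_add_sum_digits_div one_lt_two (m + n),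
      sum_digits_eq_mod_add_sum_digits_div one_lt_two m,
      sum_digits_eq_mod_add_sum_digits_div one_lt_two n]
    by_cases hcarry : m % 2 = 1 ∧ n % 2 = 1
    · have hdiv : (m + n) / 2 = m / 2 + n / 2 + 1 := by omega
      have := sum_digits_two_succ_le (m / 2 + n / 2)
      rw [hdiv]
      omega
    · have hdiv : (m + n) / 2 = m / 2 + n / 2 := by omega
      rw [hdiv]
      omega

theorem sum_digits_two_add_of_and_eq_zero {m n : ℕ} (h : m &&& n = 0) :
    (digits 2 (m + n)).sum = (digits 2 m).sum + (digits 2 n).sum := by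
  induction m using Nat.strong_induction_on generalizing n with
  | _ m ih =>
    rcases Nat.eq_zero_or_pos m with rfl | hm
    · simp
    have hlow : ¬(m % 2 = 1 ∧ n % 2 = 1) := by
      rw [← and_mod_two_eq_one, h]
      simp
    have ih' := ih (m / 2) (by omega) (by rw [← and_div_two, h])
    have hdiv : (m + n) / 2 = m / 2 + n / 2 := by omega
    rw [sum_digits_eq_mod_add_sum_digits_div one_lt_two (m + n),
      sum_digits_eq_mod_add_sum_digits_div one_lt_two m,
      sum_digits_eq_mod_add_sum_digits_div one_lt_two n, hdiv, ih']
    omega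

theorem add_eq_or_of_and_eq_zero {m n : ℕ} (h : m &&& n = 0) : m + n = m ||| n := by
  induction m using Nat.strong_induction_on generalizing n with
  | _ m ih =>
    rcases Nat.eq_zero_or_pos m with rfl | hm
    · simp
    have hlow : ¬(m % 2 = 1 ∧ n % 2 = 1) := by
      rw [← and_mod_two_eq_one, h]
      simp
    have ih' := ih (m / 2) (by omega) (by rw [← and_div_two, h])
    have hmod := @or_mod_two_eq_one m n
    have hor := (m ||| n).div_add_mod 2
    rw [or_div_two, ← ih'] at hor
    omega

theorem add_and_eq_zero {a b c : ℕ} (hab : a &&& b = 0) (hac : a &&& c = 0)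
    (hbc : b &&& c = 0) : (a + b) &&& c = 0 := by
  rw [add_eq_or_of_and_eq_zero hab, and_or_distrib_right, hac, hbc, zero_or]

end Nat

theorem stmt4_general (l r : ℕ) (hl : 0 < l) :
    ¬ (l &&& (2 * r) = 0 ∧ l &&& (l + r) = 0 ∧ (2 * r) &&& (l + r) = 0) := by
  rintro ⟨h₁, h₂, h₃⟩
  have key : (Nat.digits 2 l).sum + (Nat.digits 2 r).sum + (Nat.digits 2 (l + r)).sum ≤
      (Nat.digits 2 (l + r)).sum + (Nat.digits 2 r).sum :=
    calc (Nat.digits 2 l).sum + (Nat.digits 2 r).sum + (Nat.digits 2 (l + r)).sum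
        = (Nat.digits 2 (l + 2 * r + (l + r))).sum := by
          rw [Nat.sum_digits_two_add_of_and_eq_zero (Nat.add_and_eq_zero h₁ h₂ h₃),
            Nat.sum_digits_two_add_of_and_eq_zero h₁, Nat.sum_digits_base_mul one_lt_two]
      _ = (Nat.digits 2 (2 * (l + r) + r)).sum := by ring_nf
      _ ≤ (Nat.digits 2 (2 * (l + r))).sum + (Nat.digits 2 r).sum := Nat.sum_digits_two_add_le _ _
      _ = (Nat.digits 2 (l + r)).sum + (Nat.digits 2 r).sum := by
          rw [Nat.sum_digits_base_mul one_lt_two]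
  have := Nat.sum_digits_pos one_lt_two hl
  omega

theorem stmt4 (l r : ℕ) (hl : 0 < l) (hr : 0 < r) :
    ¬ (l &&& (2 * r) = 0 ∧ l &&& (l + r) = 0 ∧ (2 * r) &&& (l + r) = 0) :=
  stmt4_general l r hl
end

section
/- Let ℓ be a positive integer and r an odd positive integer. Then the binary expansions of ℓ, 2r, and ℓ+r+1 are not pairwise disjoint. -/
/-!
Since `r` is odd, `2 ∣ r + 1`, and `2 ∣ ℓ` because otherwise `ℓ` and `ℓ + r + 1` would share
bit `0`. If `2 ^ (k + 1)` divides both `ℓ` and `r + 1`, then `r ≡ -1 [MOD 2 ^ (k + 1)]`, so bit `k`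
of `r`, i.e. bit `k + 1` of `2 r`, is set; disjointness from `2 r` clears bit `k + 1` of `ℓ` and of
`ℓ + (r + 1)`, so `2 ^ (k + 2)` divides both, and hence their difference `r + 1`. Thus every power
of `2` divides `ℓ`, forcing `ℓ = 0`.
-/

namespace Nat

theorem testBit_eq_false_of_and_eq_zero {a b i : ℕ} (h : a &&& b = 0)
    (ha : a.testBit i = true) : b.testBit i = false := by
  simpa [ha] using congrArg (testBit · i) h

theorem two_pow_succ_dvd_of_testBit_eq_false {a k : ℕ} (hdvd : 2 ^ k ∣ a)
    (hbit : a.testBit k = false) : 2 ^ (k + 1) ∣ a := by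
  obtain ⟨b, rfl⟩ := hdvd
  have hb : 2 ∣ b := by
    simpa [testBit_two_pow_mul, Nat.dvd_iff_mod_eq_zero] using hbit
  rw [pow_succ]
  exact mul_dvd_mul_left _ hb

theorem testBit_eq_true_of_two_pow_succ_dvd_succ {r k : ℕ} (h : 2 ^ (k + 1) ∣ r + 1) :
    r.testBit k = true := by
  have hmod : r % 2 ^ (k + 1) = 2 ^ (k + 1) - 1 := by
    have hlt := Nat.mod_lt r (Nat.two_pow_pos (k + 1))
    have hdvd : 2 ^ (k + 1) ∣ r % 2 ^ (k + 1) + 1 := by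
      rwa [Nat.dvd_iff_mod_eq_zero, Nat.mod_add_mod, ← Nat.dvd_iff_mod_eq_zero]
    have := Nat.le_of_dvd (Nat.succ_pos _) hdvd
    omega
  simpa [hmod] using testBit_mod_two_pow r (k + 1) k

theorem testBit_two_mul_succ (r k : ℕ) : (2 * r).testBit (k + 1) = r.testBit k := by
  rw [testBit_succ, Nat.mul_div_cancel_left r two_pos]

theorem even_of_and_add_eq_zero {a b : ℕ} (hb : Even b) (h : a &&& (a + b) = 0) : Even a := by
  by_contra ha
  rw [Nat.not_even_iff_odd] at ha
  have hbit : (a + b).testBit 0 = false :=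
    testBit_eq_false_of_and_eq_zero h (by simpa using Nat.odd_iff.mp ha)
  simp [Nat.odd_iff.mp (ha.add_even hb)] at hbit

end Nat

open Nat

theorem two_pow_add_two_dvd_of_and_eq_zero {l r k : ℕ} (hlr : l &&& 2 * r = 0)
    (hrs : 2 * r &&& (l + r + 1) = 0) (hl : 2 ^ (k + 1) ∣ l) (hr : 2 ^ (k + 1) ∣ r + 1) :
    2 ^ (k + 2) ∣ l ∧ 2 ^ (k + 2) ∣ r + 1 := by
  have hbit : (2 * r).testBit (k + 1) = true := by
    rw [testBit_two_mul_succ]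
    exact testBit_eq_true_of_two_pow_succ_dvd_succ hr
  have hl' : 2 ^ (k + 2) ∣ l := two_pow_succ_dvd_of_testBit_eq_false hl
    (testBit_eq_false_of_and_eq_zero (by rwa [Nat.land_comm]) hbit)
  have hs : 2 ^ (k + 2) ∣ l + (r + 1) := two_pow_succ_dvd_of_testBit_eq_false (dvd_add hl hr)
    (by rw [← add_assoc]; exact testBit_eq_false_of_and_eq_zero hrs hbit)
  exact ⟨hl', (Nat.dvd_add_right hl').mp hs⟩

theorem stmt5_general (l r : ℕ) (hl : 0 < l) (hr : Odd r) :
    ¬ (l &&& (2 * r) = 0 ∧ l &&& (l + r + 1) = 0 ∧ (2 * r) &&& (l + r + 1) = 0) := by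
  rintro ⟨hlr, hls, hrs⟩
  have hdvd : ∀ k, 2 ^ (k + 1) ∣ l ∧ 2 ^ (k + 1) ∣ r + 1 := by
    intro k
    induction k with
    | zero =>
      have hl2 : Even l := even_of_and_add_eq_zero hr.add_one (by rwa [← add_assoc])
      exact ⟨hl2.two_dvd, hr.add_one.two_dvd⟩
    | succ k ih => exact two_pow_add_two_dvd_of_and_eq_zero hlr hrs ih.1 ih.2
  have hl_dvd : 2 ^ l ∣ l := (Nat.pow_dvd_pow 2 l.le_succ).trans (hdvd l).1
  exact hl.ne' (Nat.eq_zero_of_dvd_of_lt hl_dvd Nat.lt_two_pow_self)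

theorem stmt5 (l r : ℕ) (hl : 0 < l) (hr : Odd r) (hrpos : 0 < r) :
    ¬ (l &&& (2 * r) = 0 ∧ l &&& (l + r + 1) = 0 ∧ (2 * r) &&& (l + r + 1) = 0) :=
  stmt5_general l r hl hr
end

section
/- Let i < t be nonnegative integers and δ an integer with −2 ≤ δ ≤ 1; if δ = −2 assume t is even. Then C(t,i)·C(4i−t+δ, t) is even (where C(a,b) = 0 if a < b or a < 0). -/
lemma key_step (n k : ℕ) (h : n.choose k % 2 = 1) :
    (n/2).choose (k/2) % 2 = 1 ∧ (n % 2 = 0 → k % 2 = 0) := by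
  have : Fact (Nat.Prime 2) := ⟨Nat.prime_two⟩
  have H := @Choose.choose_modEq_choose_mod_mul_choose_div_nat n k 2 this
  rw [Nat.ModEq] at H
  rw [h, Nat.mul_mod] at H
  rcases Nat.mod_two_eq_zero_or_one n with hn | hn <;>
    rcases Nat.mod_two_eq_zero_or_one k with hk | hk <;>
      simp [hn, hk, Nat.choose] at H ⊢ <;> omega

lemma main_descent : ∀ t i n d : ℕ, d ≤ 3 → n + t + d = 4*i + 1 →
    (d ≤ 1 → i < t) → (d = 3 → t % 2 = 0) →
    t.choose i % 2 = 1 → n.choose t % 2 = 1 → False := by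
  intro t
  induction t using Nat.strong_induction_on with
  | _ t IH =>
  intro i n d hd heq hlt hpar hA hB
  have hi : i ≤ t := by
    by_contra h
    rw [Nat.choose_eq_zero_of_lt (by omega)] at hA; omega
  have hn : t ≤ n := by
    by_contra h
    rw [Nat.choose_eq_zero_of_lt (by omega)] at hB; omega
  have ht0 : 0 < t := by
    rcases Nat.lt_or_ge d 2 with h | h
    · have := hlt (by omega); omega
    · omega
  obtain ⟨A1, A2⟩ := key_step t i hA
  obtain ⟨B1, B2⟩ := key_step n t hB
  rcases Nat.mod_two_eq_zero_or_one t with hte | hto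
  · have hie := A2 hte
    rcases Nat.mod_two_eq_zero_or_one n with hne | hno
    · have hte2 := B2 hne
      -- d must be odd: d = 1 or d = 3
      rcases (by omega : d = 1 ∨ d = 3) with rfl | rfl
      · -- d' = 1
        exact IH (t/2) (by omega) (i/2) (n/2) 1 (by omega) (by omega)
          (fun _ => by have := hlt (by omega); omega) (by omega) A1 B1
      · -- d' = 2
        exact IH (t/2) (by omega) (i/2) (n/2) 2 (by omega) (by omega)
          (by omega) (by omega) A1 B1
    · -- n odd, d even: d = 0 or d = 2
      rcases (by omega : d = 0 ∨ d = 2) with rfl | rfl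
      · -- d' = 1
        exact IH (t/2) (by omega) (i/2) (n/2) 1 (by omega) (by omega)
          (fun _ => by have := hlt (by omega); omega) (by omega) A1 B1
      · -- d' = 2
        exact IH (t/2) (by omega) (i/2) (n/2) 2 (by omega) (by omega)
          (by omega) (by omega) A1 B1
  · -- t odd, so n odd (from B2), and d = 1 (d=3 would need t even)
    have hno : n % 2 = 1 := by
      rcases Nat.mod_two_eq_zero_or_one n with h | h
      · have := B2 h; omega
      · exact h
    have hd1 : d = 1 := by
      have : d ≠ 3 := fun h => by have := hpar h; omega
      omega
    subst hd1
    have hlt' := hlt (by omega)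
    rcases Nat.mod_two_eq_zero_or_one i with hie | hio
    · -- d' = 2
      exact IH (t/2) (by omega) (i/2) (n/2) 2 (by omega) (by omega)
        (by omega) (by omega) A1 B1
    · -- d' = 0
      exact IH (t/2) (by omega) (i/2) (n/2) 0 (by omega) (by omega)
        (fun _ => by omega) (by omega) A1 B1

/-- Binomial coefficient with integer top, extended by `0` when the top is negative. -/
def chooseZ (a : ℤ) (b : ℕ) : ℤ := if a < 0 then 0 else (a.toNat).choose b

theorem stmt6 (i t : ℕ) (δ : ℤ) (hit : i < t) (hδ1 : -2 ≤ δ) (hδ2 : δ ≤ 1)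
    (ht : δ = -2 → Even t) :
    Even ((t.choose i : ℤ) * chooseZ (4 * (i : ℤ) - (t : ℤ) + δ) t) := by
  unfold chooseZ
  split_ifs with hneg
  · simp
  · push_neg at hneg
    set n : ℕ := (4 * (i : ℤ) - (t : ℤ) + δ).toNat with hn
    have hnz : (n : ℤ) = 4 * (i : ℤ) - (t : ℤ) + δ := Int.toNat_of_nonneg hneg
    rw [← Nat.cast_mul, Int.even_coe_nat, Nat.even_iff]
    by_contra hodd
    have hodd' : (t.choose i * n.choose t) % 2 = 1 := by omega
    have hA : t.choose i % 2 = 1 := by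
      rcases Nat.mod_two_eq_zero_or_one (t.choose i) with h | h
      · rw [Nat.mul_mod, h] at hodd'; simp at hodd'
      · exact h
    have hB : n.choose t % 2 = 1 := by
      rcases Nat.mod_two_eq_zero_or_one (n.choose t) with h | h
      · rw [Nat.mul_mod, h] at hodd'; simp at hodd'
      · exact h
    set d : ℕ := (1 - δ).toNat with hdd
    have hdz : (d : ℤ) = 1 - δ := Int.toNat_of_nonneg (by omega)
    refine main_descent t i n d ?_ ?_ (fun _ => hit) ?_ hA hB
    · omega
    · omega
    · intro h3
      have : δ = -2 := by omega
      exact Nat.even_iff.mp (ht this)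
end

section
/- For an odd prime p, work in the ring R = F_p[x]/(x^p − 1) and set ψ(x) = ((1−x)^{p−1} − (1 + x + ... + x^{p−1}))/p, where the division by p is performed on integer coefficients before reduction mod p. Then (ψ(x) + 1)·(1−x)^{p−1} = 0 in R. -/
/-!
Modulo `p` the hypothesis reads `(1 - x) ^ (p - 1) = 1 + x + ⋯ + x ^ (p - 1)`, and evaluating it at
`x = 1` over `ℤ` gives `p ψ(1) = -p`, so `ψ + 1` vanishes at `1`. Hence `ψ + 1` is a multiple of
`x - 1`, and `(x - 1)(1 + x + ⋯ + x ^ (p - 1)) = x ^ p - 1`.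
-/

open Polynomial

theorem X_pow_sub_one_dvd_mul_geom_sum {R : Type*} [CommRing R] {f : R[X]} (hf : f.IsRoot 1)
    (n : ℕ) : X ^ n - 1 ∣ f * ∑ i ∈ Finset.range n, X ^ i := by
  obtain ⟨g, rfl⟩ := dvd_iff_isRoot.mpr hf
  rw [← geom_sum_mul, C_1]
  exact ⟨g, by ring⟩

section QuotientByN

variable {n : ℕ} {q : ℤ[X]}
  (hq : C (n : ℤ) * q = (1 - X) ^ (n - 1) - ∑ i ∈ Finset.range n, X ^ i)
include hq

theorem one_sub_X_pow_eq_geom_sum_zmod :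
    (1 - X : (ZMod n)[X]) ^ (n - 1) = ∑ i ∈ Finset.range n, X ^ i := by
  have h := congrArg (map (Int.castRingHom (ZMod n))) hq
  simp only [map_natCast, Polynomial.map_mul, Polynomial.map_natCast, CharP.cast_eq_zero, zero_mul,
    Polynomial.map_sub, Polynomial.map_pow, Polynomial.map_one, map_X, Polynomial.map_sum] at h
  exact sub_eq_zero.mp h.symm

theorem eval_one_eq_neg_one (hn : 1 < n) : q.eval 1 = -1 := by
  have h := congrArg (eval 1) hq
  simp only [eval_mul, eval_C, eval_sub, eval_pow, eval_one, eval_X, sub_self,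
    zero_pow (Nat.sub_ne_zero_of_lt hn), eval_finsetSum, one_pow, Finset.sum_const,
    Finset.card_range, nsmul_one, zero_sub] at h
  have hn0 : (n : ℤ) ≠ 0 := by exact_mod_cast (Nat.zero_lt_of_lt hn).ne'
  exact mul_left_cancel₀ hn0 (by rw [h, mul_neg_one])

end QuotientByN

theorem stmt7_general (p : ℕ) (hp : p.Prime) (q : Polynomial ℤ)
    (hq : C (p : ℤ) * q = (1 - X) ^ (p - 1) - ∑ i ∈ Finset.range p, X ^ i) :
    (Ideal.Quotient.mk (Ideal.span {(X : Polynomial (ZMod p)) ^ p - 1}))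
      ((q.map (Int.castRingHom (ZMod p)) + 1) * (1 - X) ^ (p - 1)) = 0 := by
  have hroot : (q.map (Int.castRingHom (ZMod p)) + 1).IsRoot 1 := by
    simp [eval_one_map, eval_one_eq_neg_one hq hp.one_lt]
  rw [Ideal.Quotient.eq_zero_iff_mem, Ideal.mem_span_singleton, one_sub_X_pow_eq_geom_sum_zmod hq]
  exact X_pow_sub_one_dvd_mul_geom_sum hroot p

theorem stmt7 (p : ℕ) (hp : p.Prime) (hodd : Odd p) (q : Polynomial ℤ)
    (hq : C (p : ℤ) * q = (1 - X) ^ (p - 1) - ∑ i ∈ Finset.range p, X ^ i) :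
    (Ideal.Quotient.mk (Ideal.span {(X : Polynomial (ZMod p)) ^ p - 1}))
      ((q.map (Int.castRingHom (ZMod p)) + 1) * (1 - X) ^ (p - 1)) = 0 :=
  stmt7_general p hp q hq
end

section
/- For an odd prime p, in R = F_p[x]/(x^p − 1) with ψ(x) = ((1−x)^{p−1} − (1 + x + ⋯ + x^{p−1}))/p as above, one has (ψ(x) + x^{(p−1)/2})·(1−x)^{p−2} = 0 in R. -/
/-!
Evaluating the defining identity of `q` and its derivative at `1` gives `q(1) = -1` and
`2 q'(1) = 1 - p`, so `1` is a double root of `q + X ^ ((p - 1) / 2)` already over `ℤ`.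
Modulo `p`, `(X - 1) ^ 2 * (1 - X) ^ (p - 2) = (1 - X) ^ p = 1 - X ^ p`.
-/

open Polynomial

theorem X_sub_C_sq_dvd_of_isRoot_derivative {R : Type*} [CommRing R] {f : R[X]} {a : R}
    (h : f.IsRoot a) (h' : (derivative f).IsRoot a) : (X - C a) ^ 2 ∣ f := by
  obtain ⟨g, rfl⟩ := dvd_iff_isRoot.mpr h
  have hg : g.IsRoot a := by simpa [IsRoot, derivative_mul] using h'
  obtain ⟨k, rfl⟩ := dvd_iff_isRoot.mpr hg
  exact ⟨k, by ring⟩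

theorem mul_one_sub_X_pow_mem_span_X_pow_sub_one {R : Type*} [CommRing R] (p : ℕ)
    [Fact p.Prime] [CharP R p] {f : R[X]} (hf : (X - 1) ^ 2 ∣ f) :
    f * (1 - X) ^ (p - 2) ∈ Ideal.span {X ^ p - 1} := by
  obtain ⟨g, rfl⟩ := hf
  have hp : 2 ≤ p := (Fact.out : p.Prime).two_le
  refine Ideal.mem_span_singleton.mpr ⟨-g, ?_⟩
  calc (X - 1) ^ 2 * g * (1 - X) ^ (p - 2) = (1 - X) ^ (2 + (p - 2)) * g := by ring
    _ = (1 - X ^ p) * g := by rw [Nat.add_sub_cancel' hp, sub_pow_char, one_pow]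
    _ = (X ^ p - 1) * -g := by ring

section

variable {n : ℕ} {q : ℤ[X]}
  (hq : C (n : ℤ) * q = (1 - X) ^ (n - 1) - ∑ i ∈ Finset.range n, X ^ i)
include hq

theorem eval_one_of_C_mul_eq (hn : 2 ≤ n) : q.eval 1 = -1 := by
  have h := congrArg (eval 1) hq
  simp only [eval_mul, eval_C, eval_sub, eval_pow, eval_one, eval_X, sub_self,
    zero_pow (by omega : n - 1 ≠ 0), eval_finsetSum, one_pow, Finset.sum_const,
    Finset.card_range, nsmul_eq_mul, mul_one, zero_sub] at h
  exact mul_left_cancel₀ (by positivity) (h.trans (mul_neg_one _).symm)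

theorem two_mul_derivative_eval_one_of_C_mul_eq (hn : 3 ≤ n) :
    2 * (derivative q).eval 1 = 1 - n := by
  have h := congrArg (fun f => (derivative f).eval 1) hq
  simp only [derivative_mul, derivative_C, zero_mul, zero_add, derivative_sub, derivative_pow,
    derivative_sum] at h
  simp only [map_natCast, eval_mul, eval_natCast, derivative_one, derivative_X, zero_sub,
    mul_neg, mul_one, eval_sub, eval_neg, eval_pow, eval_one, eval_X, sub_self,
    zero_pow (by omega : n - 1 - 1 ≠ 0), mul_zero, neg_zero, eval_finsetSum, one_pow] at h
  have hgauss : (∑ i ∈ Finset.range n, (i : ℤ)) * 2 = n * (n - 1) := by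
    have := Finset.sum_range_id_mul_two n
    zify [(by omega : 1 ≤ n)] at this
    exact this
  refine mul_left_cancel₀ (by positivity : (n : ℤ) ≠ 0) ?_
  linear_combination 2 * h - hgauss

end

theorem stmt8 (p : ℕ) (hp : p.Prime) (hodd : Odd p) (q : Polynomial ℤ)
    (hq : C (p : ℤ) * q = (1 - X) ^ (p - 1) - ∑ i ∈ Finset.range p, X ^ i) :
    (Ideal.Quotient.mk (Ideal.span {(X : Polynomial (ZMod p)) ^ p - 1}))
      ((q.map (Int.castRingHom (ZMod p)) + X ^ ((p - 1) / 2)) * (1 - X) ^ (p - 2)) = 0 := by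
  have := Fact.mk hp
  set m := (p - 1) / 2
  have hm : 2 * m = p - 1 := by obtain ⟨k, rfl⟩ := hodd; omega
  have hp3 : 3 ≤ p := by obtain ⟨k, rfl⟩ := hodd; have := hp.two_le; omega
  have hroot : (q + X ^ m).IsRoot 1 := by simp [eval_one_of_C_mul_eq hq hp.two_le]
  have hroot' : (derivative (q + X ^ m)).IsRoot 1 := by
    have := two_mul_derivative_eval_one_of_C_mul_eq hq hp3
    simp only [IsRoot, derivative_add, derivative_X_pow, eval_add, eval_mul, eval_C, eval_pow,
      eval_X, one_pow, mul_one]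
    omega
  have hdvd : ((X : (ZMod p)[X]) - 1) ^ 2 ∣ q.map (Int.castRingHom (ZMod p)) + X ^ m := by
    simpa using Polynomial.map_dvd (Int.castRingHom (ZMod p))
      (X_sub_C_sq_dvd_of_isRoot_derivative hroot hroot')
  exact Ideal.Quotient.eq_zero_iff_mem.mpr (mul_one_sub_X_pow_mem_span_X_pow_sub_one p hdvd)
end

section
/- For an odd prime p, in R = F_p[x]/(x^p − 1) with ψ(x) = ((1−x)^{p−1} − (1 + x + ⋯ + x^{p−1}))/p, one has ψ(x)^p = −1 in R. -/
/-!
Over `𝔽_p` the Frobenius gives `ψ ^ p = ψ(x ^ p)`, and `x ^ p = 1` in `R`, so `ψ ^ p = ψ(1)`.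
Evaluating the defining identity `p ψ = (1 - x) ^ (p - 1) - (1 + x + ⋯ + x ^ (p - 1))` at `1`
over `ℤ` gives `p ψ(1) = -p`, i.e. `ψ(1) = -1`.
-/

open Polynomial

theorem Polynomial.eval_one_eq_neg_one_of_C_mul_eq {p : ℕ} (hp : 1 < p) {q : ℤ[X]}
    (hq : C (p : ℤ) * q = (1 - X) ^ (p - 1) - ∑ i ∈ Finset.range p, X ^ i) :
    q.eval 1 = -1 := by
  have h := congrArg (eval 1) hq
  simp only [eval_mul, eval_C, eval_sub, eval_pow, eval_one, eval_X, sub_self,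
    zero_pow (Nat.sub_ne_zero_of_lt hp), eval_finsetSum, one_pow, Finset.sum_const,
    Finset.card_range, nsmul_eq_mul, mul_one, zero_sub] at h
  have hp0 : (p : ℤ) ≠ 0 := by exact_mod_cast (zero_lt_one.trans hp).ne'
  exact mul_left_cancel₀ hp0 (h.trans (mul_neg_one _).symm)

theorem Polynomial.mk_expand_eq_algebraMap_eval_one {R : Type*} [CommRing R] (n : ℕ) (f : R[X]) :
    Ideal.Quotient.mk (Ideal.span {(X : R[X]) ^ n - 1}) (expand R n f) =
      algebraMap R _ (f.eval 1) := by
  set I := Ideal.span {(X : R[X]) ^ n - 1}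
  have hXn : Ideal.Quotient.mkₐ R I X ^ n = 1 := by
    rw [← map_pow, ← map_one (Ideal.Quotient.mkₐ R I), Ideal.Quotient.mkₐ_eq_mk,
      Ideal.Quotient.eq]
    exact Ideal.subset_span rfl
  rw [← Ideal.Quotient.mkₐ_eq_mk R, ← aeval_X_left_apply (expand R n f), ← aeval_algHom_apply,
    expand_aeval, hXn, aeval_def, eval₂_at_one]

theorem stmt9_general (p : ℕ) (hp : p.Prime) (q : Polynomial ℤ)
    (hq : C (p : ℤ) * q = (1 - X) ^ (p - 1) - ∑ i ∈ Finset.range p, X ^ i) :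
    ((Ideal.Quotient.mk (Ideal.span {(X : Polynomial (ZMod p)) ^ p - 1}))
        (q.map (Int.castRingHom (ZMod p)))) ^ p = -1 := by
  have : Fact p.Prime := ⟨hp⟩
  rw [← map_pow, ← ZMod.expand_card (q.map _), mk_expand_eq_algebraMap_eval_one, eval_one_map,
    eval_one_eq_neg_one_of_C_mul_eq hp.one_lt hq, map_neg, map_neg, map_one, map_one]

theorem stmt9 (p : ℕ) (hp : p.Prime) (hodd : Odd p) (q : Polynomial ℤ)
    (hq : C (p : ℤ) * q = (1 - X) ^ (p - 1) - ∑ i ∈ Finset.range p, X ^ i) :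
    ((Ideal.Quotient.mk (Ideal.span {(X : Polynomial (ZMod p)) ^ p - 1}))
        (q.map (Int.castRingHom (ZMod p)))) ^ p = -1 :=
  stmt9_general p hp q hq
end

section
/- Let p be an odd prime, n a positive integer, r an integer, and define S_1(n,r) = p^{−⌊(n−1)/(p−1)⌋} · Σ_{k ≡ r (mod p), 0≤k≤n} (−1)^k C(n,k). If n = (p−1)s for a positive integer s, then S_1(n,r) is an integer and S_1(n,r) ≡ (−1)^{s−1} (mod p) for every r. -/
/-- `∑_{k ≡ r (mod p), 0 ≤ k ≤ n} (-1)^k C(n,k)`. -/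
def S1sum (p n : ℕ) (r : ℤ) : ℤ :=
  ∑ k ∈ Finset.range (n + 1), if (k : ℤ) ≡ r [ZMOD p] then (-1) ^ k * (n.choose k : ℤ) else 0

/-- `S_1(n,r) = p^{-⌊(n-1)/(p-1)⌋} ∑_{k ≡ r (p)} (-1)^k C(n,k)`. -/
def S1 (p n : ℕ) (r : ℤ) : ℤ := S1sum p n r / (p : ℤ) ^ ((n - 1) / (p - 1))

/-! In the group ring `ℤ[ℤ/p]` with generator `t`, `S1sum p n r` is the coefficient of `r` in
`y ^ n`, where `y = 1 - t`. Since `(-1)^k C(p-1,k) ≡ 1 (mod p)` for `k < p`, we have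
`y ^ (p-1) = N + p v` with `N` the sum of all group elements. From `y N = 0` and `N² = p N` one
gets `v N = -N`, and then induction gives `y ^ ((p-1)(s+1)) = p^s ((-1)^s N + p v^(s+1))`.
The coefficient of `r` on the right is `p^s ((-1)^s + p w)`. -/

open Finset AddMonoidAlgebra

namespace AddMonoidAlgebra

variable {R G : Type*}

lemma isLeftRegular_natCast [Semiring R] [AddZeroClass G] [IsAddTorsionFree R] {n : ℕ}
    (hn : n ≠ 0) : IsLeftRegular (n : R[G]) := by
  intro f g hfg
  ext x
  have := congrArg (coeff · x) hfg
  simp only [← nsmul_eq_mul, coeff_smul_apply] at this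
  exact nsmul_right_injective hn this

lemma coeff_intCast_mul [Ring R] [AddZeroClass G] (c : ℤ) (f : R[G]) (x : G) :
    ((c : R[G]) * f).coeff x = c * f.coeff x := by
  rw [← zsmul_eq_mul, coeff_smul_apply, zsmul_eq_mul]

lemma one_sub_single_pow [CommRing R] [AddCommMonoid G] (g : G) (n : ℕ) :
    (1 - single g (1 : R)) ^ n =
      ∑ k ∈ range (n + 1), single (k • g) ((-1) ^ k * (n.choose k : R)) := by
  rw [sub_eq_neg_add, add_pow]
  refine sum_congr rfl fun k _ => ?_
  rw [one_pow, mul_one, neg_pow, one_def, ← single_neg, natCast_def, single_pow, single_pow,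
    single_mul_single, single_mul_single, one_pow, mul_one, smul_zero, zero_add, add_zero]

section normElement

variable (R G) [Semiring R] [Fintype G]

noncomputable def normElement : R[G] := ∑ g : G, single g 1

variable {R G}

@[simp] lemma coeff_normElement (x : G) : (normElement R G).coeff x = 1 := by
  classical
  simp [normElement, Finsupp.single_apply]

lemma single_one_mul_normElement [AddGroup G] (g : G) :
    single g (1 : R) * normElement R G = normElement R G := by
  rw [normElement, mul_sum]
  exact Fintype.sum_equiv (Equiv.addLeft g) _ _ fun h => by simp [single_mul_single]

lemma normElement_mul_self [AddGroup G] :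
    normElement R G * normElement R G = Fintype.card G * normElement R G := by
  conv_lhs => arg 1; rw [normElement]
  rw [sum_mul]
  simp only [single_one_mul_normElement, sum_const, card_univ, nsmul_eq_mul]

end normElement

end AddMonoidAlgebra

lemma ZMod.sum_range_natCast {M : Type*} [AddCommMonoid M] (n : ℕ) [NeZero n] (f : ZMod n → M) :
    ∑ k ∈ range n, f k = ∑ x, f x :=
  sum_nbij' (↑) ZMod.val (fun _ _ => mem_univ _) (fun x _ => mem_range.2 x.val_lt)
    (fun _ hk => ZMod.val_natCast_of_lt (mem_range.1 hk)) (fun x _ => ZMod.natCast_zmod_val x)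
    (fun _ _ => rfl)

section CommRing

variable {A : Type*} [CommRing A] {y N q v : A} {m : ℕ}

lemma mul_eq_neg_of_pow_eq_add_mul (hm : m ≠ 0) (hyN : y * N = 0) (hNN : N * N = q * N)
    (hq : IsLeftRegular q) (hv : y ^ m = N + q * v) : v * N = -N := by
  have hN : (N + q * v) * N = 0 := by
    rw [← hv, ← Nat.succ_pred_eq_of_ne_zero hm, pow_succ, mul_assoc, hyN, mul_zero]
  exact hq (by linear_combination hN - hNN)

lemma pow_mul_eq_pow_mul_of_mul_eq {a b x : A} (h : a * x = b * x) (k : ℕ) :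
    a ^ k * x = b ^ k * x := by
  induction k with
  | zero => simp
  | succ k ih => rw [pow_succ, mul_assoc, h, mul_left_comm, ih, pow_succ, mul_left_comm, mul_assoc]

lemma pow_mul_succ_eq_of_pow_eq_add_mul (hNN : N * N = q * N) (hvN : v * N = -N)
    (hv : y ^ m = N + q * v) (s : ℕ) :
    y ^ (m * (s + 1)) = q ^ s * ((-1) ^ s * N + q * v ^ (s + 1)) := by
  induction s with
  | zero => simp [hv]
  | succ s ih =>
    have hvsN := pow_mul_eq_pow_mul_of_mul_eq (hvN.trans (neg_one_mul N).symm) (s + 1)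
    rw [show m * (s + 1 + 1) = m * (s + 1) + m by ring, pow_add, ih, hv]
    linear_combination q ^ s * (-1) ^ s * hNN + q ^ (s + 1) * (-1) ^ s * hvN + q ^ (s + 1) * hvsN

end CommRing

lemma Nat.Prime.neg_one_pow_mul_choose_sub_one_modEq_one {p k : ℕ} (hp : p.Prime) (hk : k < p) :
    (-1) ^ k * ((p - 1).choose k : ℤ) ≡ 1 [ZMOD p] := by
  obtain ⟨n, rfl⟩ : ∃ n, p = n + 1 := ⟨p - 1, (Nat.succ_pred_eq_of_pos hp.pos).symm⟩
  rw [Nat.add_sub_cancel, ← Int.alternating_sum_range_choose_eq_choose, sum_range_succ']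
  refine Int.modEq_iff_dvd.2 ?_
  simp only [pow_zero, Nat.choose_zero_right, Nat.cast_one, mul_one, sub_add_cancel_right]
  refine dvd_neg.2 (dvd_sum fun i hi => dvd_mul_of_dvd_right ?_ _)
  exact Int.natCast_dvd_natCast.2 (hp.dvd_choose_self i.succ_ne_zero (by grind))

lemma S1sum_eq_coeff (p n : ℕ) (r : ℤ) :
    S1sum p n r = ((1 - single 1 1 : ℤ[ZMod p]) ^ n).coeff r := by
  rw [one_sub_single_pow, coeff_sum, Finsupp.finsetSum_apply, S1sum]
  refine sum_congr rfl fun k _ => ?_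
  simp only [coeff_single, Finsupp.single_apply, nsmul_one, ← ZMod.intCast_eq_intCast_iff,
    Int.cast_natCast]

section ZModPrime

variable (p : ℕ) [hp : Fact p.Prime]

lemma natCast_dvd_one_sub_single_pow_sub_one_sub_normElement :
    (p : ℤ[ZMod p]) ∣ (1 - single 1 1) ^ (p - 1) - normElement ℤ (ZMod p) := by
  rw [one_sub_single_pow, Nat.sub_add_cancel hp.out.one_le, normElement, ← ZMod.sum_range_natCast,
    ← sum_sub_distrib]
  refine dvd_sum fun k hk => ?_
  obtain ⟨c, hc⟩ := (hp.out.neg_one_pow_mul_choose_sub_one_modEq_one (mem_range.1 hk)).symm.dvd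
  refine ⟨single k c, ?_⟩
  rw [nsmul_one, ← single_sub, hc, natCast_def, single_mul_single, zero_add]

lemma exists_S1sum_pred_mul_succ_eq (s : ℕ) (r : ℤ) :
    ∃ w : ℤ, S1sum p ((p - 1) * (s + 1)) r = p ^ s * ((-1) ^ s + p * w) := by
  obtain ⟨v, hv⟩ := natCast_dvd_one_sub_single_pow_sub_one_sub_normElement p
  set y : ℤ[ZMod p] := 1 - single 1 1
  set N := normElement ℤ (ZMod p)
  have hyv : y ^ (p - 1) = N + p * v := eq_add_of_sub_eq' hv
  have hyN : y * N = 0 := by rw [sub_mul, one_mul, single_one_mul_normElement, sub_self]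
  have hNN : N * N = p * N := by rw [normElement_mul_self, ZMod.card]
  have hvN := mul_eq_neg_of_pow_eq_add_mul (Nat.sub_ne_zero_of_lt hp.out.one_lt) hyN hNN
    (isLeftRegular_natCast hp.out.ne_zero) hyv
  refine ⟨(v ^ (s + 1)).coeff r, ?_⟩
  have hcast : (p : ℤ[ZMod p]) ^ s * ((-1) ^ s * N + p * v ^ (s + 1)) =
      ((p ^ s : ℤ) : ℤ[ZMod p]) *
        ((((-1) ^ s : ℤ) : ℤ[ZMod p]) * N + ((p : ℤ) : ℤ[ZMod p]) * v ^ (s + 1)) := by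
    push_cast; rfl
  rw [S1sum_eq_coeff, pow_mul_succ_eq_of_pow_eq_add_mul hNN hvN hyv s, hcast, coeff_intCast_mul,
    coeff_add, Finsupp.add_apply, coeff_intCast_mul, coeff_intCast_mul, coeff_normElement, mul_one]
  push_cast
  ring

end ZModPrime

lemma Nat.mul_add_one_sub_one_div {a : ℕ} (ha : 0 < a) (s : ℕ) : (a * (s + 1) - 1) / a = s :=
  Nat.div_eq_of_lt_le (by rw [mul_comm s, mul_add_one]; omega)
    (by rw [mul_comm (s + 1)]; exact Nat.sub_lt (by positivity) one_pos)

theorem stmt11_general (p s : ℕ) (r : ℤ) (hp : p.Prime) (hs : 1 ≤ s) :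
    (p : ℤ) ^ (((p - 1) * s - 1) / (p - 1)) ∣ S1sum p ((p - 1) * s) r ∧
      S1 p ((p - 1) * s) r ≡ (-1) ^ (s - 1) [ZMOD p] := by
  have := Fact.mk hp
  obtain ⟨s, rfl⟩ := Nat.exists_eq_add_of_le' hs
  obtain ⟨w, hw⟩ := exists_S1sum_pred_mul_succ_eq p s r
  have hexp : ((p - 1) * (s + 1) - 1) / (p - 1) = s :=
    Nat.mul_add_one_sub_one_div (Nat.sub_pos_of_lt hp.one_lt) s
  have hS1 : S1 p ((p - 1) * (s + 1)) r = (-1) ^ s + p * w := by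
    rw [S1, hexp, hw, Int.mul_ediv_cancel_left _ (pow_ne_zero _ (by exact_mod_cast hp.ne_zero))]
  refine ⟨by rw [hexp, hw]; exact dvd_mul_right _ _, ?_⟩
  rw [hS1, Nat.add_sub_cancel]
  exact Int.modEq_add_fac_self

theorem stmt11 (p s : ℕ) (r : ℤ) (hp : p.Prime) (hodd : Odd p) (hs : 1 ≤ s) :
    (p : ℤ) ^ (((p - 1) * s - 1) / (p - 1)) ∣ S1sum p ((p - 1) * s) r ∧
      S1 p ((p - 1) * s) r ≡ (-1) ^ (s - 1) [ZMOD p] :=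
  stmt11_general p s r hp hs
end

section
/- Let p be an odd prime, n a positive integer, r an integer, and S_1 as above. Then S_1(n + p(p−1), r) ≡ −S_1(n, r) (mod p). -/
open Finset AddMonoidAlgebra

section CommRing

variable {R : Type*} [CommRing R] {p : ℕ}

lemma exists_one_add_pow_prime_eq (hp : p.Prime) (x : R) :
    ∃ Q, (1 + x) ^ p = 1 + x ^ p + p * x * (1 + x * Q) := by
  refine ⟨∑ k ∈ Ioo 1 p, x ^ (k - 2) * ((p.choose k / p : ℕ) : R), ?_⟩
  have hIoo : Ioo 0 p = insert 1 (Ioo 1 p) := by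
    ext k
    simp only [mem_Ioo, mem_insert]
    have := hp.one_lt
    omega
  have hsum : ∑ k ∈ Ioo 0 p, x ^ (k - 1) * 1 ^ (p - k - 1) * ((p.choose k / p : ℕ) : R)
      = 1 + x * ∑ k ∈ Ioo 1 p, x ^ (k - 2) * ((p.choose k / p : ℕ) : R) := by
    rw [hIoo, sum_insert (by simp), mul_sum, Nat.choose_one_right, Nat.div_self hp.pos]
    congr 1
    · simp
    refine sum_congr rfl fun k hk => ?_
    have hk2 : k - 2 + 1 = k - 1 := by have := (mem_Ioo.mp hk).1; omega
    rw [one_pow, mul_one, ← mul_assoc, ← pow_succ', hk2]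
  rw [add_comm 1 x, add_pow_prime_eq hp, hsum, one_pow, mul_one]
  ring

lemma exists_pow_prime_eq_of_one_sub_pow (hp : p.Prime) (hodd : Odd p) {t : R}
    (ht : (1 - t) ^ p = 1) : ∃ E W : R, t ^ p = p * t * E ∧ E ^ p + 1 = p * t * W := by
  obtain ⟨Q, hQ⟩ := exists_one_add_pow_prime_eq hp (-t)
  rw [← sub_eq_add_neg, ht, hodd.neg_pow] at hQ
  have htp : t ^ p = p * t * (t * Q - 1) := by linear_combination hQ
  obtain ⟨Q', hQ'⟩ := exists_one_add_pow_prime_eq hp (-(t * Q))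
  have hE : (t * Q - 1) ^ p = -(1 + -(t * Q)) ^ p := by
    rw [← hodd.neg_pow]
    congr 1
    ring
  rw [hodd.neg_pow, mul_pow, htp] at hQ'
  exact ⟨t * Q - 1, (t * Q - 1) * Q ^ p + Q * (1 - t * Q * Q'), htp,
    by linear_combination hE - hQ'⟩

variable {c t E W : R}

lemma pow_add_mul_sub_one_eq (hp : 0 < p) (ht : t ^ p = c * t * E) (m j : ℕ) :
    t ^ (m + 1 + j * (p - 1)) = c ^ j * t ^ (m + 1) * E ^ j := by
  induction j generalizing m with
  | zero => simp
  | succ j ih =>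
    rw [show m + 1 + (j + 1) * (p - 1) = (m + (p - 1)) + 1 + j * (p - 1) by ring, ih,
      add_assoc, pow_add, Nat.sub_add_cancel hp, ht]
    ring

lemma pow_div_sub_one_dvd_pow_succ (hp : 0 < p) (ht : t ^ p = c * t * E) (m : ℕ) :
    c ^ (m / (p - 1)) ∣ t ^ (m + 1) := by
  have h := pow_add_mul_sub_one_eq hp ht (m % (p - 1)) (m / (p - 1))
  rw [add_right_comm, Nat.mod_add_div'] at h
  exact ⟨t ^ (m % (p - 1) + 1) * E ^ (m / (p - 1)), by rw [h]; ring⟩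

lemma pow_add_mul_sub_one_add_eq (hp : 0 < p) (ht : t ^ p = c * t * E)
    (hE : E ^ p + 1 = c * t * W) (m : ℕ) :
    t ^ (m + 1 + p * (p - 1)) + c ^ p * t ^ (m + 1) = c ^ (p + 1) * t ^ (m + 2) * W := by
  rw [pow_add_mul_sub_one_eq hp ht m p]
  linear_combination c ^ p * t ^ (m + 1) * hE

lemma pow_dvd_pow_add_mul_sub_one_add (hp : 0 < p) (ht : t ^ p = c * t * E)
    (hE : E ^ p + 1 = c * t * W) (m : ℕ) :
    c ^ (m / (p - 1) + p + 1) ∣ t ^ (m + 1 + p * (p - 1)) + c ^ p * t ^ (m + 1) := by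
  have h := dvd_trans (pow_dvd_pow c (Nat.div_le_div_right (Nat.le_succ m)))
    (pow_div_sub_one_dvd_pow_succ hp ht (m + 1))
  rw [pow_add_mul_sub_one_add_eq hp ht hE, show m / (p - 1) + p + 1 = p + 1 + m / (p - 1) by ring,
    pow_add, mul_assoc]
  exact mul_dvd_mul_left _ (h.mul_right W)

end CommRing

lemma Int.ediv_pow_add_modEq_neg {q A B : ℤ} {e k : ℕ} (hq : q ≠ 0) (hA : q ^ (e + k) ∣ A)
    (hB : q ^ e ∣ B) (h : q ^ (e + k + 1) ∣ A + q ^ k * B) :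
    A / q ^ (e + k) ≡ -(B / q ^ e) [ZMOD q] := by
  obtain ⟨a, rfl⟩ := hA
  obtain ⟨b, rfl⟩ := hB
  have hsum : q ^ (e + k) * a + q ^ k * (q ^ e * b) = q ^ (e + k) * (a + b) := by ring
  rw [hsum, pow_succ, mul_dvd_mul_iff_left (pow_ne_zero _ hq)] at h
  rw [Int.mul_ediv_cancel_left _ (pow_ne_zero _ hq), Int.mul_ediv_cancel_left _ (pow_ne_zero _ hq),
    Int.modEq_iff_dvd, show -b - a = -(a + b) by ring]
  exact h.neg_right

lemma AddMonoidAlgebra.natCast_dvd_coeff {k G : Type*} [Semiring k] [AddMonoid G] {n : ℕ}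
    {x : k[G]} (h : (n : k[G]) ∣ x) (g : G) : (n : k) ∣ x.coeff g := by
  obtain ⟨y, rfl⟩ := h
  rw [natCast_def, coeff_single_zero_mul]
  exact dvd_mul_right _ _

lemma AddMonoidAlgebra.coeff_add_natCast_mul {k G : Type*} [Semiring k] [AddZeroClass G] (n : ℕ)
    (x y : k[G]) (g : G) : (x + n * y).coeff g = x.coeff g + n * y.coeff g := by
  rw [coeff_add, Finsupp.add_apply, natCast_def, coeff_single_zero_mul]

noncomputable def oneSubGen (p : ℕ) : AddMonoidAlgebra ℤ (ZMod p) := 1 - single 1 1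

lemma one_sub_oneSubGen_pow (p : ℕ) : (1 - oneSubGen p) ^ p = 1 := by
  rw [oneSubGen, sub_sub_cancel, single_pow, nsmul_one, ZMod.natCast_self, one_pow, one_def]

lemma coeff_oneSubGen_pow (p n : ℕ) (r : ℤ) :
    (oneSubGen p ^ n).coeff (r : ZMod p) = S1sum p n r := by
  have h : oneSubGen p = single 1 (-1) + 1 := by rw [oneSubGen, single_neg]; abel
  rw [h, add_pow, coeff_sum, Finsupp.finsetSum_apply, S1sum]
  refine sum_congr rfl fun k _ => ?_
  rw [one_pow, mul_one, single_pow, natCast_def, single_mul_single, add_zero, nsmul_one,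
    coeff_single, Finsupp.single_apply, ← Int.cast_natCast]
  exact if_congr (ZMod.intCast_eq_intCast_iff _ _ _) rfl rfl

theorem stmt13 (p n : ℕ) (r : ℤ) (hp : p.Prime) (hodd : Odd p) (hn : 1 ≤ n) :
    S1 p (n + p * (p - 1)) r ≡ -S1 p n r [ZMOD p] := by
  obtain ⟨m, rfl⟩ : ∃ m, n = m + 1 := ⟨n - 1, by omega⟩
  have hd : 0 < p - 1 := Nat.sub_pos_of_lt hp.one_lt
  obtain ⟨E, W, htE, hEW⟩ :=
    exists_pow_prime_eq_of_one_sub_pow hp hodd (one_sub_oneSubGen_pow p)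
  have hdvd {N k : ℕ} (h : (p : AddMonoidAlgebra ℤ (ZMod p)) ^ k ∣ oneSubGen p ^ N) :
      (p : ℤ) ^ k ∣ S1sum p N r := by
    rw [← Nat.cast_pow] at h
    rw [← coeff_oneSubGen_pow]
    exact_mod_cast natCast_dvd_coeff h _
  have hexp : (m + 1 + p * (p - 1) - 1) / (p - 1) = m / (p - 1) + p := by
    rw [add_right_comm, Nat.add_sub_cancel, Nat.add_mul_div_right _ _ hd]
  have hA := pow_div_sub_one_dvd_pow_succ hp.pos htE (m + p * (p - 1))
  rw [Nat.add_mul_div_right _ _ hd, add_right_comm] at hA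
  have hB := pow_div_sub_one_dvd_pow_succ hp.pos htE m
  have hC : (p : ℤ) ^ (m / (p - 1) + p + 1) ∣
      S1sum p (m + 1 + p * (p - 1)) r + p ^ p * S1sum p (m + 1) r := by
    rw [← coeff_oneSubGen_pow, ← coeff_oneSubGen_pow, ← Nat.cast_pow p p,
      ← coeff_add_natCast_mul]
    have h := pow_dvd_pow_add_mul_sub_one_add hp.pos htE hEW m
    rw [← Nat.cast_pow, ← Nat.cast_pow p p] at h
    exact natCast_dvd_coeff h _
  simpa only [S1, hexp, Nat.add_sub_cancel] using
    Int.ediv_pow_add_modEq_neg (Int.natCast_ne_zero.mpr hp.ne_zero) (hdvd hA) (hdvd hB) hC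
end

section
/- If n is an odd positive integer, r an integer with n − 2r ≡ 0 (mod p) for an odd prime p, then Σ_{k ≡ r (mod p), 0≤k≤n} (−1)^k C(n,k) = 0 and Σ_{k ≡ pr (mod p²), 0≤k≤pn} (−1)^k C(pn,k) = 0. -/
/-!
The reflection `k ↦ m - k` preserves `range (m + 1)` and `C(m, k)`; for odd `m` it flips the sign
`(-1)^k`, and when `m ≡ 2s (mod M)` it maps the class `k ≡ s (mod M)` to itself. Hence the restricted
alternating sum equals its own negative. The second identity is the first one with
`m = p n`, `M = p²`, `s = p r`, since `p n - 2 p r = p (n - 2 r)`.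
-/

open Finset

lemma neg_one_pow_sub_of_odd {R : Type*} [Ring R] {m k : ℕ} (hm : Odd m) (hk : k ≤ m) :
    (-1 : R) ^ (m - k) = -(-1) ^ k := by
  obtain ⟨j, rfl⟩ := Nat.exists_eq_add_of_le hk
  rw [Nat.add_sub_cancel_left]
  rcases Nat.even_or_odd k with hk' | hk'
  · rw [(Nat.odd_add'.mp hm).mpr hk' |>.neg_one_pow, hk'.neg_one_pow]
  · rw [(Nat.odd_add.mp hm).mp hk' |>.neg_one_pow, hk'.neg_one_pow, neg_neg]

lemma Int.sub_modEq_iff_modEq_of_modEq_two_mul {M a s k : ℤ} (h : a ≡ 2 * s [ZMOD M]) :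
    a - k ≡ s [ZMOD M] ↔ k ≡ s [ZMOD M] := by
  constructor <;> intro hk <;> simpa [two_mul] using h.sub hk

theorem sum_range_ite_modEq_neg_one_pow_mul_choose_eq_zero {m : ℕ} {M s : ℤ} (hm : Odd m)
    (hs : (m : ℤ) ≡ 2 * s [ZMOD M]) :
    (∑ k ∈ range (m + 1),
        if (k : ℤ) ≡ s [ZMOD M] then (-1 : ℤ) ^ k * (m.choose k : ℤ) else 0) = 0 := by
  set f : ℕ → ℤ := fun k => if (k : ℤ) ≡ s [ZMOD M] then (-1 : ℤ) ^ k * (m.choose k : ℤ) else 0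
  have hreflect : ∀ k ∈ range (m + 1), f (m - k) = -f k := by
    intro k hk
    have hkm : k ≤ m := Nat.lt_succ_iff.mp (mem_range.mp hk)
    simp only [f, Nat.cast_sub hkm, Int.sub_modEq_iff_modEq_of_modEq_two_mul hs,
      neg_one_pow_sub_of_odd hm hkm, Nat.choose_symm hkm]
    split_ifs <;> ring
  have hsum : ∑ k ∈ range (m + 1), -f k = ∑ k ∈ range (m + 1), f k := by
    rw [← sum_congr rfl hreflect, ← sum_range_reflect f (m + 1)]
    simp
  rw [sum_neg_distrib] at hsum
  change ∑ k ∈ range (m + 1), f k = 0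
  linarith

theorem stmt15_general (p n : ℕ) (r : ℤ) (hpodd : Odd p) (hnodd : Odd n)
    (hr : (n : ℤ) - 2 * r ≡ 0 [ZMOD p]) :
    (∑ k ∈ Finset.range (n + 1),
        if (k : ℤ) ≡ r [ZMOD p] then (-1 : ℤ) ^ k * (n.choose k : ℤ) else 0) = 0 ∧
    (∑ k ∈ Finset.range (p * n + 1),
        if (k : ℤ) ≡ (p : ℤ) * r [ZMOD (p ^ 2 : ℕ)] then (-1 : ℤ) ^ k * ((p * n).choose k : ℤ)
        else 0) = 0 := by
  have hn2r : (n : ℤ) ≡ 2 * r [ZMOD p] := by simpa using hr.add_right (2 * r)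
  refine ⟨sum_range_ite_modEq_neg_one_pow_mul_choose_eq_zero hnodd hn2r,
    sum_range_ite_modEq_neg_one_pow_mul_choose_eq_zero (hpodd.mul hnodd) ?_⟩
  have hpn : (p : ℤ) * n ≡ p * (2 * r) [ZMOD p * p] := hn2r.mul_left'
  push_cast
  convert hpn using 1 <;> ring

theorem stmt15 (p n : ℕ) (r : ℤ) (hp : p.Prime) (hpodd : Odd p) (hn : 1 ≤ n) (hnodd : Odd n)
    (hr : (n : ℤ) - 2 * r ≡ 0 [ZMOD p]) :
    (∑ k ∈ Finset.range (n + 1),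
        if (k : ℤ) ≡ r [ZMOD p] then (-1 : ℤ) ^ k * (n.choose k : ℤ) else 0) = 0 ∧
    (∑ k ∈ Finset.range (p * n + 1),
        if (k : ℤ) ≡ (p : ℤ) * r [ZMOD (p ^ 2 : ℕ)] then (-1 : ℤ) ^ k * ((p * n).choose k : ℤ)
        else 0) = 0 :=
  stmt15_general p n r hpodd hnodd hr
end

section
/- For the prime 2 define T_{k}(n,r) = (k!·2^k / n!)·Σ_i (−1)^{2i+r} C(n, 2i+r) C(i,k) (a 2-adic rational which is in fact a 2-adic integer). Then for all k ≥ 1, n ≥ 1, and integers r: T_k(n,r) + r·T_{k−1}(n,r+2) = −T_{k−1}(n−1,r+1), where the sums defining T range over all i with 0 ≤ 2i+r ≤ n. -/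
/-- Binomial coefficient `C(n,m)` with integer lower index, zero when `m < 0`. -/
def chooseInt (n : ℕ) (m : ℤ) : ℚ := if m < 0 then 0 else (n.choose m.toNat : ℚ)

/-- `T_k(n,r) = T^2_{k,1}(n,r) = (k!·2^k/n!)·∑_i (-1)^{2i+r} C(n,2i+r) C(i,k)`. -/
def T (k n : ℕ) (r : ℤ) : ℚ :=
  ((k.factorial : ℚ) * 2 ^ k / (n.factorial : ℚ)) *
    ∑ i ∈ Finset.range (n + 1 + r.natAbs),
      (-1 : ℚ) ^ (2 * (i : ℤ) + r) * chooseInt n (2 * (i : ℤ) + r) * (i.choose k : ℚ)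

/-!
Since `(-1)^(2i+r) = (-1)^r`, `T k n r` is `(-1)^r k! 2^k / n!` times
`S_k(n,r) = ∑_i C(n,2i+r) C(i,k)` (`chooseSum`), and clearing these prefactors reduces the
identity to `n·S_{k-1}(n-1,r+1) = 2k·S_k(n,r) + r·S_{k-1}(n,r+2)`. Absorption
`n·C(n-1,m-1) = m·C(n,m)` at `m = 2i+r+2` splits the left side into
`∑_i 2(i+1)·C(n,2(i+1)+r) C(i,k-1)` plus `r·S_{k-1}(n,r+2)`, and `(i+1)·C(i,k-1) = k·C(i+1,k)`
followed by the shift `i+1 ↦ i` turns the first part into `2k·S_k(n,r)`; the new `i = 0` term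
vanishes because `k ≥ 1`.
-/

open Finset

lemma chooseInt_eq_zero_of_lt {n : ℕ} {m : ℤ} (h : (n : ℤ) < m) : chooseInt n m = 0 := by
  rw [chooseInt, if_neg (by omega), Nat.choose_eq_zero_of_lt (by omega), Nat.cast_zero]

lemma add_one_mul_chooseInt (n : ℕ) (m : ℤ) :
    ((n : ℚ) + 1) * chooseInt n m = ((m : ℚ) + 1) * chooseInt (n + 1) (m + 1) := by
  rcases le_or_gt 0 m with hm | hm
  · lift m to ℕ using hm
    have h := Nat.add_one_mul_choose_eq n m
    simp only [chooseInt, if_neg (by omega : ¬((m : ℤ) < 0)),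
      if_neg (by omega : ¬((m : ℤ) + 1 < 0))]
    rw [show ((m : ℤ) + 1).toNat = m + 1 by omega, Int.toNat_natCast]
    exact_mod_cast h.trans (mul_comm _ _)
  · obtain rfl | hm' : m = -1 ∨ m + 1 < 0 := by omega
    · simp [chooseInt]
    · simp [chooseInt, hm, hm']

lemma sum_range_chooseInt_eq {n : ℕ} {r : ℤ} (g : ℕ → ℚ) {N N' : ℕ}
    (hN : (n : ℤ) < 2 * N + r) (hN' : (n : ℤ) < 2 * N' + r) :
    ∑ i ∈ range N, chooseInt n (2 * i + r) * g i =
      ∑ i ∈ range N', chooseInt n (2 * i + r) * g i := by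
  have hvanish : ∀ i ≥ min N N', chooseInt n (2 * i + r) * g i = 0 := fun i hi => by
    rw [chooseInt_eq_zero_of_lt (by omega), zero_mul]
  rw [eventually_constant_sum hvanish (min_le_left N N'),
    eventually_constant_sum hvanish (min_le_right N N')]

def chooseSum (k n : ℕ) (r : ℤ) : ℚ :=
  ∑ i ∈ range (n + 1 + r.natAbs), chooseInt n (2 * i + r) * (i.choose k : ℚ)

lemma chooseSum_eq_sum_range (k n : ℕ) (r : ℤ) {N : ℕ} (hN : (n : ℤ) < 2 * N + r) :
    chooseSum k n r = ∑ i ∈ range N, chooseInt n (2 * i + r) * (i.choose k : ℚ) :=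
  sum_range_chooseInt_eq _ (by omega) hN

lemma T_eq_chooseSum (k n : ℕ) (r : ℤ) :
    T k n r = (-1 : ℚ) ^ r * ((k.factorial : ℚ) * 2 ^ k / n.factorial) * chooseSum k n r := by
  have hsign : ∀ i : ℕ, (-1 : ℚ) ^ (2 * (i : ℤ) + r) = (-1) ^ r := fun i => by
    rw [zpow_add₀ (by norm_num), Even.neg_one_zpow ⟨i, by ring⟩, one_mul]
  simp only [T, chooseSum, hsign, mul_sum]
  exact sum_congr rfl fun i _ => by ring

lemma add_one_mul_chooseSum_succ (k n : ℕ) (r : ℤ) {N : ℕ}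
    (hN : (n : ℤ) < 2 * N + (r + 2)) :
    ((k : ℚ) + 1) * chooseSum (k + 1) n r =
      ∑ i ∈ range N, ((i : ℚ) + 1) * chooseInt n (2 * i + (r + 2)) * (i.choose k : ℚ) := by
  rw [chooseSum_eq_sum_range _ _ _ (N := N + 1) (by omega), sum_range_succ']
  simp only [Nat.choose_zero_succ, Nat.cast_zero, mul_zero, add_zero, mul_sum]
  refine sum_congr rfl fun i _ => ?_
  have h : ((i : ℚ) + 1) * i.choose k = (i + 1).choose (k + 1) * ((k : ℚ) + 1) := by
    exact_mod_cast Nat.add_one_mul_choose_eq i k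
  rw [show 2 * ((i + 1 : ℕ) : ℤ) + r = 2 * i + (r + 2) by push_cast; ring]
  linear_combination chooseInt n (2 * i + (r + 2)) * h.symm

lemma add_one_mul_chooseSum_add_one (k n : ℕ) (r : ℤ) :
    ((n : ℚ) + 1) * chooseSum k n (r + 1) =
      2 * ((k : ℚ) + 1) * chooseSum (k + 1) (n + 1) r + r * chooseSum k (n + 1) (r + 2) := by
  set N := n + 2 + r.natAbs
  rw [chooseSum_eq_sum_range _ _ _ (N := N) (by omega), mul_assoc,
    add_one_mul_chooseSum_succ _ _ _ (N := N) (by omega),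
    chooseSum_eq_sum_range _ _ (r + 2) (N := N) (by omega), mul_sum, mul_sum, mul_sum,
    ← sum_add_distrib]
  refine sum_congr rfl fun i _ => ?_
  have h := add_one_mul_chooseInt n (2 * i + (r + 1))
  rw [show 2 * (i : ℤ) + (r + 1) + 1 = 2 * i + (r + 2) by ring] at h
  push_cast at h
  linear_combination (i.choose k : ℚ) * h

theorem stmt17 (k n : ℕ) (r : ℤ) (hk : 1 ≤ k) (hn : 1 ≤ n) :
    T k n r + (r : ℚ) * T (k - 1) n (r + 2) = -T (k - 1) (n - 1) (r + 1) := by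
  obtain ⟨k, rfl⟩ : ∃ k', k = k' + 1 := ⟨k - 1, by omega⟩
  obtain ⟨n, rfl⟩ : ∃ n', n = n' + 1 := ⟨n - 1, by omega⟩
  simp only [Nat.add_sub_cancel, T_eq_chooseSum]
  rw [zpow_add₀ (by norm_num), zpow_add_one₀ (by norm_num), Nat.factorial_succ,
    Nat.factorial_succ]
  push_cast
  field_simp
  linear_combination 2 ^ k * (add_one_mul_chooseSum_add_one k n r).symm
end
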